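/- arXiv:1905.12257 — 2 statements merged into one kernel-verified Lean document; each statement's English description precedes it below -/
import Mathlib

section
/- Let Z be a real Banach space, u ∈ S_Z, and 0 < λ ≤ 1. Then n(Z,u) ≥ λ if and only if max{ ‖u + z‖, ‖u − z‖ } ≥ 1 + λ‖z‖ for every z ∈ Z. -/
open NormedSpace

/-- Numerical radius of `z` with respect to the unit vector `u`. -/
noncomputable def vRad {Z : Type*} [NormedAddCommGroup Z] [NormedSpace ℝ Z] (u z : Z) : ℝ :=
  sSup {r : ℝ | ∃ φ : StrongDual ℝ Z, ‖φ‖ = 1 ∧ φ u = 1 ∧ |φ z| = r}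

/-- Numerical index of the space with respect to the unit vector `u`. -/
noncomputable def nInd {Z : Type*} [NormedAddCommGroup Z] [NormedSpace ℝ Z] (u : Z) : ℝ :=
  sInf {r : ℝ | ∃ z : Z, ‖z‖ = 1 ∧ vRad u z = r}

/-!
The right derivative `D x` of the norm at `u` in direction `x` is sublinear and bounded by `‖x‖`,
so Hahn–Banach yields, for each `z`, a norm-one functional `φ` with `φ u = 1` and `φ z = D z`;
hence `max (D z) (D (-z)) ≤ v(u, z)`. Since `D z` and `D (-z)` are the limits of the slopes of
`t ↦ ‖u ± t • z‖` at `0`, which decrease as `t ↓ 0`, the inequality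
`max ‖u + t • z‖ ‖u - t • z‖ ≥ 1 + λ t ‖z‖` for all `t > 0` gives `λ ‖z‖ ≤ v(u, z)`.
Conversely, every such `φ` satisfies `1 + |φ z| ≤ max ‖u + z‖ ‖u - z‖`.
-/

open Set

section NormDirDeriv

variable {E : Type*} [SeminormedAddCommGroup E] [NormedSpace ℝ E]

noncomputable def normSlope (u x : E) (t : ℝ) : ℝ := (‖u + t • x‖ - ‖u‖) / t

/-- The right derivative at `0` of `t ↦ ‖u + t • x‖`: by convexity the slopes decrease as
`t ↓ 0`, so their infimum is their limit. -/
noncomputable def normDirDeriv (u x : E) : ℝ := sInf (normSlope u x '' Ioi 0)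

theorem convexOn_norm_add_smul (u x : E) : ConvexOn ℝ univ fun t : ℝ => ‖u + t • x‖ := by
  have := convexOn_univ_norm.comp_affineMap (AffineMap.lineMap u (u + x) : ℝ →ᵃ[ℝ] E)
  simpa [Function.comp_def, AffineMap.lineMap_apply_module', add_comm] using this

theorem normSlope_mono (u x : E) : MonotoneOn (normSlope u x) (Ioi 0) := by
  intro s hs t ht hst
  have := (convexOn_norm_add_smul u x).secant_mono (a := 0) (mem_univ _) (mem_univ s)
    (mem_univ t) (ne_of_gt hs) (ne_of_gt ht) hst
  simpa [normSlope] using this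

theorem neg_norm_le_normSlope (u x : E) {t : ℝ} (ht : 0 < t) : -‖x‖ ≤ normSlope u x t := by
  rw [normSlope, le_div_iff₀ ht]
  have := norm_sub_norm_le u (-(t • x))
  rw [sub_neg_eq_add, norm_neg, norm_smul, Real.norm_of_nonneg ht.le] at this
  linarith

theorem normSlope_le_norm (u x : E) {t : ℝ} (ht : 0 < t) : normSlope u x t ≤ ‖x‖ := by
  rw [normSlope, div_le_iff₀ ht]
  have := norm_add_le u (t • x)
  rw [norm_smul, Real.norm_of_nonneg ht.le] at this
  linarith

theorem bddBelow_normSlope_image (u x : E) : BddBelow (normSlope u x '' Ioi 0) :=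
  ⟨-‖x‖, forall_mem_image.2 fun _ ht => neg_norm_le_normSlope u x ht⟩

theorem normDirDeriv_le_normSlope (u x : E) {t : ℝ} (ht : 0 < t) :
    normDirDeriv u x ≤ normSlope u x t :=
  csInf_le (bddBelow_normSlope_image u x) (mem_image_of_mem _ ht)

theorem le_normDirDeriv_iff {u x : E} {c : ℝ} :
    c ≤ normDirDeriv u x ↔ ∀ t > 0, c ≤ normSlope u x t := by
  rw [normDirDeriv, le_csInf_iff (bddBelow_normSlope_image u x) ((nonempty_Ioi).image _),
    forall_mem_image]
  rfl

theorem normDirDeriv_le_norm (u x : E) : normDirDeriv u x ≤ ‖x‖ :=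
  (normDirDeriv_le_normSlope u x one_pos).trans (normSlope_le_norm u x one_pos)

theorem normDirDeriv_zero (u : E) : normDirDeriv u 0 = 0 :=
  le_antisymm ((normDirDeriv_le_norm u 0).trans_eq norm_zero)
    (le_normDirDeriv_iff.2 fun t _ => by simp [normSlope])

theorem normDirDeriv_self_le (u : E) : normDirDeriv u u ≤ ‖u‖ := by
  refine (normDirDeriv_le_normSlope u u one_pos).trans_eq ?_
  rw [normSlope, one_smul, ← two_smul ℝ u, norm_smul]
  norm_num
  ring

theorem normDirDeriv_neg_self_le (u : E) : normDirDeriv u (-u) ≤ -‖u‖ := by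
  refine (normDirDeriv_le_normSlope u (-u) one_half_pos).trans_eq ?_
  have : u + (1 / 2 : ℝ) • -u = (1 / 2 : ℝ) • u := by module
  rw [normSlope, this, norm_smul]
  norm_num
  ring

theorem normSlope_add_le (u x y : E) {t : ℝ} (ht : 0 < t) :
    normSlope u (x + y) (t / 2) ≤ normSlope u x t + normSlope u y t := by
  have hmid : u + (t / 2) • (x + y) = (1 / 2 : ℝ) • (u + t • x) + (1 / 2 : ℝ) • (u + t • y) := by
    module
  have := norm_add_le ((1 / 2 : ℝ) • (u + t • x)) ((1 / 2 : ℝ) • (u + t • y))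
  rw [← hmid, norm_smul, norm_smul, Real.norm_of_nonneg one_half_pos.le] at this
  rw [normSlope, normSlope, normSlope, ← add_div, div_le_div_iff₀ (half_pos ht) ht]
  nlinarith

theorem normDirDeriv_add_le (u x y : E) :
    normDirDeriv u (x + y) ≤ normDirDeriv u x + normDirDeriv u y := by
  have key : ∀ s > 0, ∀ t > 0, normDirDeriv u (x + y) - normSlope u y t ≤ normSlope u x s := by
    intro s hs t ht
    have hr : 0 < min s t := lt_min hs ht
    have := (normDirDeriv_le_normSlope u (x + y) (half_pos hr)).trans (normSlope_add_le u x y hr)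
    linarith [normSlope_mono u x hr hs (min_le_left s t),
      normSlope_mono u y hr ht (min_le_right s t)]
  have : ∀ t > 0, normDirDeriv u (x + y) - normDirDeriv u x ≤ normSlope u y t := fun t ht =>
    sub_le_comm.1 (le_normDirDeriv_iff.2 fun s hs => key s hs t ht)
  linarith [le_normDirDeriv_iff.2 this]

theorem normSlope_smul (u x : E) {c t : ℝ} (hc : 0 < c) (ht : 0 < t) :
    normSlope u (c • x) t = c * normSlope u x (t * c) := by
  rw [normSlope, normSlope, smul_smul]
  field_simp

theorem normDirDeriv_smul (u x : E) {c : ℝ} (hc : 0 < c) :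
    normDirDeriv u (c • x) = c * normDirDeriv u x := by
  refine le_antisymm ?_ (le_normDirDeriv_iff.2 fun t ht => ?_)
  · rw [← div_le_iff₀' hc, le_normDirDeriv_iff]
    intro t ht
    rw [div_le_iff₀' hc]
    calc normDirDeriv u (c • x) ≤ normSlope u (c • x) (t / c) :=
          normDirDeriv_le_normSlope u _ (div_pos ht hc)
      _ = c * normSlope u x t := by
          rw [normSlope_smul u x hc (div_pos ht hc), div_mul_cancel₀ _ hc.ne']
  · rw [normSlope_smul u x hc ht]
    exact mul_le_mul_of_nonneg_left (normDirDeriv_le_normSlope u x (mul_pos ht hc)) hc.le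

theorem smul_normDirDeriv_le (u x : E) (c : ℝ) : c * normDirDeriv u x ≤ normDirDeriv u (c • x) := by
  rcases lt_trichotomy c 0 with hc | rfl | hc
  · have hsum := normDirDeriv_add_le u x (-x)
    rw [add_neg_cancel, normDirDeriv_zero] at hsum
    rw [← neg_neg c, neg_smul, ← smul_neg, normDirDeriv_smul u _ (neg_pos.2 hc)]
    nlinarith
  · simp [normDirDeriv_zero]
  · exact (normDirDeriv_smul u x hc).ge

-- Hahn–Banach, dominated by the sublinear functional `normDirDeriv u`.
theorem exists_dual_eq_normDirDeriv (u z : E) :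
    ∃ φ : StrongDual ℝ E, ‖φ‖ ≤ 1 ∧ φ u = ‖u‖ ∧ φ z = normDirDeriv u z := by
  have hzero : ∀ c : ℝ, c • z = 0 → RingHom.id ℝ c • normDirDeriv u z = 0 := by
    intro c hc
    rcases smul_eq_zero.1 hc with rfl | rfl
    · exact zero_smul _ _
    · rw [normDirDeriv_zero, smul_zero]
  set f := LinearPMap.mkSpanSingleton' z (normDirDeriv u z) hzero
  have hf : ∀ x : f.domain, f x ≤ normDirDeriv u x := by
    rintro ⟨x, hx⟩
    obtain ⟨c, rfl⟩ := Submodule.mem_span_singleton.1 hx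
    rw [LinearPMap.mkSpanSingleton'_apply]
    exact smul_normDirDeriv_le u z c
  obtain ⟨g, hgf, hg⟩ := exists_extension_of_le_sublinear f (normDirDeriv u)
    (fun c hc x => normDirDeriv_smul u x hc) (normDirDeriv_add_le u) hf
  have hg_abs : ∀ x, |g x| ≤ ‖x‖ := fun x => abs_le.2
    ⟨by linarith [map_neg g x, (hg (-x)).trans (normDirDeriv_le_norm u (-x)), norm_neg x],
      (hg x).trans (normDirDeriv_le_norm u x)⟩
  refine ⟨g.mkContinuous 1 fun x => by simpa using hg_abs x, ?_, ?_, ?_⟩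
  · exact LinearMap.mkContinuous_norm_le g zero_le_one _
  · show g u = ‖u‖
    have := map_neg g u
    linarith [(hg u).trans (normDirDeriv_self_le u), (hg (-u)).trans (normDirDeriv_neg_self_le u)]
  · exact (hgf ⟨z, Submodule.mem_span_singleton_self z⟩).trans
      (LinearPMap.mkSpanSingleton'_apply_self _ _ _ _)

theorem le_max_normDirDeriv {u z : E} {l : ℝ}
    (h : ∀ t > 0, l ≤ max (normSlope u z t) (normSlope u (-z) t)) :
    l ≤ max (normDirDeriv u z) (normDirDeriv u (-z)) := by
  by_contra! hlt
  obtain ⟨hz, hnz⟩ := max_lt_iff.1 hlt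
  obtain ⟨_, ⟨s, hs, rfl⟩, hs_lt⟩ := exists_lt_of_csInf_lt ((nonempty_Ioi).image _) hz
  obtain ⟨_, ⟨t, ht, rfl⟩, ht_lt⟩ := exists_lt_of_csInf_lt ((nonempty_Ioi).image _) hnz
  have hr : 0 < min s t := lt_min hs ht
  have := h _ hr
  rw [le_max_iff] at this
  rcases this with h1 | h1
  · linarith [normSlope_mono u z hr hs (min_le_left s t)]
  · linarith [normSlope_mono u (-z) hr ht (min_le_right s t)]

theorem norm_add_abs_le_max_norm {φ : StrongDual ℝ E} {u : E} (hφ : ‖φ‖ ≤ 1) (hφu : φ u = ‖u‖)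
    (z : E) :
    ‖u‖ + |φ z| ≤ max ‖u + z‖ ‖u - z‖ := by
  have hle : ∀ x, φ x ≤ ‖x‖ := fun x =>
    (le_abs_self _).trans ((φ.le_opNorm x).trans (mul_le_of_le_one_left (norm_nonneg x) hφ))
  rcases le_total 0 (φ z) with hz | hz
  · calc ‖u‖ + |φ z| = φ (u + z) := by rw [map_add, hφu, abs_of_nonneg hz]
      _ ≤ max ‖u + z‖ ‖u - z‖ := (hle _).trans (le_max_left _ _)
  · calc ‖u‖ + |φ z| = φ (u - z) := by rw [map_sub, hφu, abs_of_nonpos hz, sub_eq_add_neg]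
      _ ≤ max ‖u + z‖ ‖u - z‖ := (hle _).trans (le_max_right _ _)

theorem max_normSlope_neg (u z : E) {t : ℝ} (ht : 0 < t) :
    max (normSlope u z t) (normSlope u (-z) t) = (max ‖u + t • z‖ ‖u - t • z‖ - ‖u‖) / t := by
  rw [normSlope, normSlope, max_div_div_right ht.le, max_sub_sub_right, smul_neg, ← sub_eq_add_neg]

end NormDirDeriv

section NumericalRadius

variable {Z : Type*} [NormedAddCommGroup Z] [NormedSpace ℝ Z] {u : Z}

theorem le_vRad {φ : StrongDual ℝ Z} (hφ : ‖φ‖ = 1) (hφu : φ u = 1) (z : Z) :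
    |φ z| ≤ vRad u z := by
  refine le_csSup ⟨‖z‖, ?_⟩ ⟨φ, hφ, hφu, rfl⟩
  rintro _ ⟨ψ, hψ, -, rfl⟩
  simpa [hψ] using ψ.le_opNorm z

theorem vRad_nonneg (u z : Z) : 0 ≤ vRad u z :=
  Real.sSup_nonneg fun _ ⟨_, _, _, hr⟩ => hr ▸ abs_nonneg _

theorem vRad_smul (u z : Z) (c : ℝ) : vRad u (c • z) = |c| * vRad u z := by
  rw [vRad, vRad, ← smul_eq_mul, ← Real.sSup_smul_of_nonneg (abs_nonneg c)]
  congr 1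
  ext r
  simp only [mem_ofPred_eq, mem_smul_set, map_smul, smul_eq_mul, abs_mul]
  constructor
  · rintro ⟨φ, hφ, hφu, rfl⟩
    exact ⟨_, ⟨φ, hφ, hφu, rfl⟩, rfl⟩
  · rintro ⟨_, ⟨φ, hφ, hφu, rfl⟩, rfl⟩
    exact ⟨φ, hφ, hφu, rfl⟩

theorem exists_state_eq_normDirDeriv (hu : ‖u‖ = 1) (z : Z) :
    ∃ φ : StrongDual ℝ Z, ‖φ‖ = 1 ∧ φ u = 1 ∧ φ z = normDirDeriv u z := by
  obtain ⟨φ, hφ, hφu, hφz⟩ := exists_dual_eq_normDirDeriv u z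
  rw [hu] at hφu
  refine ⟨φ, hφ.antisymm ?_, hφu, hφz⟩
  simpa [hφu, hu] using φ.le_opNorm u

theorem one_add_vRad_le_max_norm (hu : ‖u‖ = 1) (z : Z) :
    1 + vRad u z ≤ max ‖u + z‖ ‖u - z‖ := by
  obtain ⟨φ₀, hφ₀, hφ₀u, -⟩ := exists_state_eq_normDirDeriv hu z
  rw [← le_sub_iff_add_le']
  refine csSup_le ⟨_, φ₀, hφ₀, hφ₀u, rfl⟩ ?_
  rintro _ ⟨φ, hφ, hφu, rfl⟩
  rw [le_sub_iff_add_le', ← hu]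
  exact norm_add_abs_le_max_norm hφ.le (hφu.trans hu.symm) z

theorem max_normDirDeriv_neg_le_vRad (hu : ‖u‖ = 1) (z : Z) :
    max (normDirDeriv u z) (normDirDeriv u (-z)) ≤ vRad u z := by
  refine max_le ?_ ?_
  · obtain ⟨φ, hφ, hφu, hφz⟩ := exists_state_eq_normDirDeriv hu z
    exact hφz ▸ (le_abs_self _).trans (le_vRad hφ hφu z)
  · obtain ⟨φ, hφ, hφu, hφz⟩ := exists_state_eq_normDirDeriv hu (-z)
    rw [← hφz, map_neg]
    exact (neg_le_abs _).trans (le_vRad hφ hφu z)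

theorem le_nInd_iff (hu : ‖u‖ = 1) {l : ℝ} : l ≤ nInd u ↔ ∀ z : Z, l * ‖z‖ ≤ vRad u z := by
  have hbdd : BddBelow {r : ℝ | ∃ z : Z, ‖z‖ = 1 ∧ vRad u z = r} :=
    ⟨0, by rintro _ ⟨z, -, rfl⟩; exact vRad_nonneg u z⟩
  rw [nInd, le_csInf_iff hbdd ⟨_, u, hu, rfl⟩]
  constructor
  · intro h z
    rcases eq_or_ne z 0 with rfl | hz
    · simpa using vRad_nonneg u 0
    · have hz' : 0 < ‖z‖ := norm_pos_iff.2 hz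
      have := h _ ⟨‖z‖⁻¹ • z, by simp [norm_smul, hz'.ne'], rfl⟩
      rw [vRad_smul, abs_of_pos (inv_pos.2 hz'), ← div_eq_inv_mul, le_div_iff₀ hz'] at this
      linarith
  · rintro h _ ⟨z, hz, rfl⟩
    simpa [hz] using h z

end NumericalRadius

theorem stmt5_general {Z : Type*} [NormedAddCommGroup Z] [NormedSpace ℝ Z]
    (u : Z) (hu : ‖u‖ = 1) (l : ℝ) :
    l ≤ nInd u ↔ ∀ z : Z, 1 + l * ‖z‖ ≤ max ‖u + z‖ ‖u - z‖ := by
  rw [le_nInd_iff hu]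
  refine ⟨fun h z => (add_le_add_right (h z) 1).trans (one_add_vRad_le_max_norm hu z),
    fun h z => ?_⟩
  refine (le_max_normDirDeriv fun t ht => ?_).trans (max_normDirDeriv_neg_le_vRad hu z)
  have hmax := h (t • z)
  rw [norm_smul, Real.norm_of_nonneg ht.le] at hmax
  rw [max_normSlope_neg u z ht, le_div_iff₀ ht]
  linarith

theorem stmt5 {Z : Type*} [NormedAddCommGroup Z] [NormedSpace ℝ Z] [CompleteSpace Z]
    (u : Z) (hu : ‖u‖ = 1) (l : ℝ) (hl0 : 0 < l) (hl1 : l ≤ 1) :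
    l ≤ nInd u ↔ ∀ z : Z, 1 + l * ‖z‖ ≤ max ‖u + z‖ ‖u - z‖ :=
  stmt5_general u hu l
end

section
/- Let Z be a Banach space, u ∈ S_Z, z ∈ Z, and C ⊆ B_{Z*} a subset whose weak-* closed convex hull is B_{Z*}. Then for every functional z₀* ∈ S_{Z*} with z₀*(u) = 1 and every δ > 0, there exists z* ∈ C such that Re z*(u) > 1 − δ and Re z*(z) > Re z₀*(z) − δ. -/
/-!
Tilt the target functional: with `c = (2‖z‖ + δ) / δ`, a single weak-* continuous linear
functional `w ↦ w (z + c • u)` controls both conditions. Since `z₀` lies in the weak-* closed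
convex hull of `C`, some `φ ∈ C` satisfies `φ (z + c • u) > z₀ (z + c • u) - δ`; as `φ u ≤ 1` this
forces `φ z > z₀ z - δ`, and as `φ z - z₀ z ≤ 2‖z‖` it forces `c (1 - φ u) < 2‖z‖ + δ = c δ`.
-/

open NormedSpace

theorem exists_lt_apply_of_mem_closure_convexHull {E : Type*} [AddCommMonoid E] [Module ℝ E]
    [TopologicalSpace E] {S : Set E} {x : E} (hx : x ∈ closure (convexHull ℝ S)) {f : E → ℝ}
    (hlin : IsLinearMap ℝ f) (hcont : Continuous f) {c : ℝ} (hc : c < f x) :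
    ∃ s ∈ S, c < f s := by
  by_contra! h
  have hhull : closure (convexHull ℝ S) ⊆ {y | f y ≤ c} :=
    closure_minimal (convexHull_min h (convex_halfSpace_le hlin c))
      (isClosed_le hcont continuous_const)
  exact (hc.trans_le (hhull hx)).false

theorem sub_lt_apply_of_sub_lt_apply_add_smul {E : Type*} [SeminormedAddCommGroup E]
    [NormedSpace ℝ E] {φ ψ : StrongDual ℝ E} (hφ : ‖φ‖ ≤ 1) (hψ : ‖ψ‖ ≤ 1) {u z : E}
    (hu : ‖u‖ ≤ 1) (hψu : ψ u = 1) {δ : ℝ} (hδ : 0 < δ)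
    (h : ψ (z + ((2 * ‖z‖ + δ) / δ) • u) - δ < φ (z + ((2 * ‖z‖ + δ) / δ) • u)) :
    1 - δ < φ u ∧ ψ z - δ < φ z := by
  set c := (2 * ‖z‖ + δ) / δ
  have hcδ : c * δ = 2 * ‖z‖ + δ := div_mul_cancel₀ _ hδ.ne'
  have hc0 : 0 < c := by positivity
  have habs : ∀ f : StrongDual ℝ E, ‖f‖ ≤ 1 → ∀ x, |f x| ≤ ‖x‖ := fun f hf x => by
    simpa using f.le_of_opNorm_le hf x
  have hφu : φ u ≤ 1 := (le_abs_self _).trans ((habs φ hφ u).trans hu)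
  have hφz : φ z ≤ ‖z‖ := (le_abs_self _).trans (habs φ hφ z)
  have hψz : -‖z‖ ≤ ψ z := neg_le_of_abs_le (habs ψ hψ z)
  simp only [map_add, map_smul, smul_eq_mul, hψu] at h
  constructor
  · have hmul : c * (1 - φ u) < c * δ := by linarith
    linarith [lt_of_mul_lt_mul_left hmul hc0.le]
  · linarith [mul_nonneg hc0.le (sub_nonneg.2 hφu)]

theorem stmt17_general {Z : Type*} [NormedAddCommGroup Z] [NormedSpace ℝ Z]
    (u : Z) (hu : ‖u‖ = 1) (z : Z) (C : Set (StrongDual ℝ Z))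
    (hC : C ⊆ Metric.closedBall 0 1)
    (hdense : closure (convexHull ℝ (StrongDual.toWeakDual '' C))
        = StrongDual.toWeakDual '' Metric.closedBall (0 : StrongDual ℝ Z) 1)
    (z₀ : StrongDual ℝ Z) (hz₀ : ‖z₀‖ = 1) (hz₀u : z₀ u = 1) (δ : ℝ) (hδ : 0 < δ) :
    ∃ φ ∈ C, 1 - δ < φ u ∧ z₀ z - δ < φ z := by
  set v := z + ((2 * ‖z‖ + δ) / δ) • u
  have hz₀mem : StrongDual.toWeakDual z₀ ∈ closure (convexHull ℝ (StrongDual.toWeakDual '' C)) :=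
    hdense ▸ ⟨z₀, by simp [hz₀], rfl⟩
  obtain ⟨_, ⟨φ, hφC, rfl⟩, hφv⟩ := exists_lt_apply_of_mem_closure_convexHull hz₀mem
    (f := fun w : WeakDual ℝ Z => w v) ⟨fun _ _ => rfl, fun _ _ => rfl⟩
    (WeakDual.eval_continuous v) (sub_lt_self (z₀ v) hδ)
  exact ⟨φ, hφC, sub_lt_apply_of_sub_lt_apply_add_smul (by simpa using hC hφC) hz₀.le
    hu.le hz₀u hδ hφv⟩

theorem stmt17 {Z : Type*} [NormedAddCommGroup Z] [NormedSpace ℝ Z] [CompleteSpace Z]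
    (u : Z) (hu : ‖u‖ = 1) (z : Z) (C : Set (StrongDual ℝ Z))
    (hC : C ⊆ Metric.closedBall 0 1)
    (hdense : closure (convexHull ℝ (StrongDual.toWeakDual '' C))
        = StrongDual.toWeakDual '' Metric.closedBall (0 : StrongDual ℝ Z) 1)
    (z₀ : StrongDual ℝ Z) (hz₀ : ‖z₀‖ = 1) (hz₀u : z₀ u = 1) (δ : ℝ) (hδ : 0 < δ) :
    ∃ φ ∈ C, 1 - δ < φ u ∧ z₀ z - δ < φ z :=
  stmt17_general u hu z C hC hdense z₀ hz₀ hz₀u δ hδ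
end
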